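/- arXiv:1903.12653 — 6 statements merged into one kernel-verified Lean document; each statement's English description precedes it below -/
import Mathlib

section
/- The set T equals the downward closure, within the nonnegative orthant of ℝ³ (with the componentwise order), of the set {a·α₁ + b·α₂ + c·α₃ : a, b, c ≥ 0, a + b + c ≤ 1}; that is, a point x ∈ ℝ³ with all coordinates ≥ 0 lies in T if and only if there exist a, b, c ≥ 0 with a + b + c ≤ 1 such that x ≤ a·α₁ + b·α₂ + c·α₃ componentwise. -/
/-!
Solving `x = a • α₁ + b • α₂ + c • α₃` exactly gives `a = (x₁ - x₂ + x₃) / 2`, `b = (x₁ + x₂ - x₃) / 2`,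
`c = (-x₁ + x₂ + x₃) / 2`. Replacing these by their positive parts keeps `a + b ≥ x₁`, `b + c ≥ x₂`,
`a + c ≥ x₃`, and since any two of them sum to a coordinate `xₖ ≥ 0`, at most one is negative: the sum
of the positive parts is then `(x₁ + x₂ + x₃) / 2` or a single coordinate, hence `≤ 1` on `T`.
Conversely, each coordinate of a combination is at most `a + b + c` and the coordinates sum to
`2 (a + b + c)`.
-/

/-- The set `T = {x ∈ ℝ³ : 0 ≤ xₖ ≤ 1 for each k, and x₁+x₂+x₃ ≤ 2}`. -/
def T : Set (ℝ × ℝ × ℝ) :=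
  {x | 0 ≤ x.1 ∧ x.1 ≤ 1 ∧ 0 ≤ x.2.1 ∧ x.2.1 ≤ 1 ∧ 0 ≤ x.2.2 ∧ x.2.2 ≤ 1 ∧
    x.1 + x.2.1 + x.2.2 ≤ 2}

/-- `α₁ = (1,0,1)`, `α₂ = (1,1,0)`, `α₃ = (0,1,1)`. -/
def α₁ : ℝ × ℝ × ℝ := (1, 0, 1)
def α₂ : ℝ × ℝ × ℝ := (1, 1, 0)
def α₃ : ℝ × ℝ × ℝ := (0, 1, 1)

theorem max_zero_add_max_zero_add_max_zero_le {α : Type*} [AddCommGroup α] [LinearOrder α]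
    [IsOrderedAddMonoid α] {p q r s : α} (hs : 0 ≤ s) (hp : p ≤ s) (hq : q ≤ s) (hr : r ≤ s)
    (hpq : p + q ≤ s) (hqr : q + r ≤ s) (hpr : p + r ≤ s) (hpqr : p + q + r ≤ s) :
    max 0 p + max 0 q + max 0 r ≤ s := by
  rcases le_total p 0 with hp0 | hp0 <;> rcases le_total q 0 with hq0 | hq0 <;>
    rcases le_total r 0 with hr0 | hr0 <;>
    simp [*]

theorem exists_le_combination_of_mem_T {x₁ x₂ x₃ : ℝ} (hx : (x₁, x₂, x₃) ∈ T) :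
    ∃ a b c : ℝ, 0 ≤ a ∧ 0 ≤ b ∧ 0 ≤ c ∧ a + b + c ≤ 1 ∧
      x₁ ≤ a + b ∧ x₂ ≤ b + c ∧ x₃ ≤ a + c := by
  obtain ⟨h₁, h₁', h₂, h₂', h₃, h₃', hsum⟩ := hx
  dsimp only at h₁ h₁' h₂ h₂' h₃ h₃' hsum
  have ha := le_max_right 0 ((x₁ - x₂ + x₃) / 2)
  have hb := le_max_right 0 ((x₁ + x₂ - x₃) / 2)
  have hc := le_max_right 0 ((-x₁ + x₂ + x₃) / 2)
  refine ⟨max 0 ((x₁ - x₂ + x₃) / 2), max 0 ((x₁ + x₂ - x₃) / 2), max 0 ((-x₁ + x₂ + x₃) / 2),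
    le_max_left _ _, le_max_left _ _, le_max_left _ _,
    max_zero_add_max_zero_add_max_zero_le zero_le_one (by linarith) (by linarith) (by linarith)
      (by linarith) (by linarith) (by linarith) (by linarith),
    by linarith, by linarith, by linarith⟩

theorem mem_T_of_le_combination {x₁ x₂ x₃ a b c : ℝ} (h₁ : 0 ≤ x₁) (h₂ : 0 ≤ x₂) (h₃ : 0 ≤ x₃)
    (ha : 0 ≤ a) (hb : 0 ≤ b) (hc : 0 ≤ c) (habc : a + b + c ≤ 1)
    (k₁ : x₁ ≤ a + b) (k₂ : x₂ ≤ b + c) (k₃ : x₃ ≤ a + c) : (x₁, x₂, x₃) ∈ T :=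
  ⟨h₁, by linarith, h₂, by linarith, h₃, by linarith, by linarith⟩

theorem stmt_4 (x₁ x₂ x₃ : ℝ) (h₁ : 0 ≤ x₁) (h₂ : 0 ≤ x₂) (h₃ : 0 ≤ x₃) :
    (x₁, x₂, x₃) ∈ T ↔
      ∃ a b c : ℝ, 0 ≤ a ∧ 0 ≤ b ∧ 0 ≤ c ∧ a + b + c ≤ 1 ∧
        x₁ ≤ a * α₁.1 + b * α₂.1 + c * α₃.1 ∧
        x₂ ≤ a * α₁.2.1 + b * α₂.2.1 + c * α₃.2.1 ∧
        x₃ ≤ a * α₁.2.2 + b * α₂.2.2 + c * α₃.2.2 := by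
  simp only [α₁, α₂, α₃, mul_one, mul_zero, add_zero, zero_add]
  refine ⟨exists_le_combination_of_mem_T, ?_⟩
  rintro ⟨a, b, c, ha, hb, hc, habc, k₁, k₂, k₃⟩
  exact mem_T_of_le_combination h₁ h₂ h₃ ha hb hc habc k₁ k₂ k₃
end

section
/- For all a₁, a₂, a₃, b₁, b₂, b₃ ≥ 0, the pair (a, b) is T-admissible if and only if for all i, j ∈ {1,2,3}, the triple (a₁·α_{i,1} + b₁·α_{j,1}, a₂·α_{i,2} + b₂·α_{j,2}, a₃·α_{i,3} + b₃·α_{j,3}) lies in T, where α_{i,k} denotes the k-th coordinate of α_i. -/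
/-- The three points `α₁ = (1,0,1)`, `α₂ = (1,1,0)`, `α₃ = (0,1,1)`. -/
def α : Fin 3 → ℝ × ℝ × ℝ
  | 0 => (1, 0, 1)
  | 1 => (1, 1, 0)
  | 2 => (0, 1, 1)

/-- `(a, b)` is `T`-admissible. -/
def Admissible (a b : ℝ × ℝ × ℝ) : Prop :=
  ∀ u ∈ T, ∀ v ∈ T,
    (a.1 * u.1 + b.1 * v.1, a.2.1 * u.2.1 + b.2.1 * v.2.1,
      a.2.2 * u.2.2 + b.2.2 * v.2.2) ∈ T

open Set

lemma mem_T_iff (x : ℝ × ℝ × ℝ) :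
    x ∈ T ↔ x.1 ∈ Icc 0 1 ∧ x.2.1 ∈ Icc 0 1 ∧ x.2.2 ∈ Icc 0 1 ∧ x.1 + x.2.1 + x.2.2 ≤ 2 := by
  simp only [T, mem_ofPred_eq, mem_Icc, and_assoc]

lemma α_mem_T (i : Fin 3) : α i ∈ T := by
  fin_cases i <;> norm_num [T, α]

lemma mul_add_mul_mem_Icc {a b u v : ℝ} (ha : 0 ≤ a) (hb : 0 ≤ b) (hab : a + b ≤ 1)
    (hu : u ∈ Icc (0 : ℝ) 1) (hv : v ∈ Icc (0 : ℝ) 1) : a * u + b * v ∈ Icc (0 : ℝ) 1 := by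
  obtain ⟨hu₀, hu₁⟩ := hu
  obtain ⟨hv₀, hv₁⟩ := hv
  refine ⟨by positivity, ?_⟩
  linarith [mul_le_of_le_one_right ha hu₁, mul_le_of_le_one_right hb hv₁]

lemma mul_add_mul_add_mul_le_of_le {m p q x y z : ℝ} (hm : 0 ≤ m) (hp : m ≤ p) (hq : m ≤ q)
    (hy : y ≤ 1) (hz : z ≤ 1) (hs : x + y + z ≤ 2) : m * x + p * y + q * z ≤ p + q := by
  linear_combination mul_nonneg hm (sub_nonneg.2 hs) +
    mul_nonneg (sub_nonneg.2 hp) (sub_nonneg.2 hy) + mul_nonneg (sub_nonneg.2 hq) (sub_nonneg.2 hz)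

lemma exists_α_weighted_sum_ge {a₁ a₂ a₃ : ℝ} (ha₁ : 0 ≤ a₁) (ha₂ : 0 ≤ a₂) (ha₃ : 0 ≤ a₃)
    {u : ℝ × ℝ × ℝ} (hu : u ∈ T) :
    ∃ i, a₁ * u.1 + a₂ * u.2.1 + a₃ * u.2.2 ≤ a₁ * (α i).1 + a₂ * (α i).2.1 + a₃ * (α i).2.2 := by
  obtain ⟨-, hu₁, -, hu₂, -, hu₃, hs⟩ := hu
  obtain ⟨h₂, h₃⟩ | ⟨h₁, h₃⟩ | ⟨h₁, h₂⟩ :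
      (a₁ ≤ a₂ ∧ a₁ ≤ a₃) ∨ (a₂ ≤ a₁ ∧ a₂ ≤ a₃) ∨ (a₃ ≤ a₁ ∧ a₃ ≤ a₂) := by grind
  · have := mul_add_mul_add_mul_le_of_le ha₁ h₂ h₃ hu₂ hu₃ hs
    exact ⟨2, by simp only [α]; linarith⟩
  · have := mul_add_mul_add_mul_le_of_le (x := u.2.1) ha₂ h₁ h₃ hu₁ hu₃ (by linarith)
    exact ⟨0, by simp only [α]; linarith⟩
  · have := mul_add_mul_add_mul_le_of_le (x := u.2.2) ha₃ h₁ h₂ hu₁ hu₂ (by linarith)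
    exact ⟨1, by simp only [α]; linarith⟩

theorem stmt_6 (a₁ a₂ a₃ b₁ b₂ b₃ : ℝ)
    (ha₁ : 0 ≤ a₁) (ha₂ : 0 ≤ a₂) (ha₃ : 0 ≤ a₃)
    (hb₁ : 0 ≤ b₁) (hb₂ : 0 ≤ b₂) (hb₃ : 0 ≤ b₃) :
    Admissible (a₁, a₂, a₃) (b₁, b₂, b₃) ↔
      ∀ i j : Fin 3,
        (a₁ * (α i).1 + b₁ * (α j).1,
         a₂ * (α i).2.1 + b₂ * (α j).2.1,
         a₃ * (α i).2.2 + b₃ * (α j).2.2) ∈ T := by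
  refine ⟨fun h i j ↦ h _ (α_mem_T i) _ (α_mem_T j), fun h u hu v hv ↦ ?_⟩
  obtain ⟨i, hi⟩ := exists_α_weighted_sum_ge ha₁ ha₂ ha₃ hu
  obtain ⟨j, hj⟩ := exists_α_weighted_sum_ge hb₁ hb₂ hb₃ hv
  have hab₁ : a₁ + b₁ ≤ 1 := by simpa [α] using ((mem_T_iff _).1 (h 0 0)).1.2
  have hab₂ : a₂ + b₂ ≤ 1 := by simpa [α] using ((mem_T_iff _).1 (h 1 1)).2.1.2
  have hab₃ : a₃ + b₃ ≤ 1 := by simpa [α] using ((mem_T_iff _).1 (h 0 0)).2.2.1.2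
  rw [mem_T_iff] at hu hv ⊢
  exact ⟨mul_add_mul_mem_Icc ha₁ hb₁ hab₁ hu.1 hv.1,
    mul_add_mul_mem_Icc ha₂ hb₂ hab₂ hu.2.1 hv.2.1,
    mul_add_mul_mem_Icc ha₃ hb₃ hab₃ hu.2.2.1 hv.2.2.1,
    by linarith [((mem_T_iff _).1 (h i j)).2.2.2]⟩
end

section
/- For all a₁, a₂, a₃, b₁, b₂, b₃ ≥ 0, if (a, b) is T-admissible, then b₁·a₂·a₃ ≤ 8/27. -/
theorem mul_mul_le_of_add_add_le {x y z c : ℝ} (hx : 0 ≤ x) (hy : 0 ≤ y) (hz : 0 ≤ z)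
    (h : x + y + z ≤ 3 * c) : x * y * z ≤ c ^ 3 := by
  have amgm : 27 * (x * y * z) ≤ (x + y + z) ^ 3 := by
    nlinarith [mul_nonneg hx (sq_nonneg (y - z)), mul_nonneg hy (sq_nonneg (x - z)),
      mul_nonneg hz (sq_nonneg (x - y)), mul_nonneg (add_nonneg (add_nonneg hx hy) hz)
        (add_nonneg (add_nonneg (sq_nonneg (x - y)) (sq_nonneg (y - z))) (sq_nonneg (x - z)))]
  have hcube : (x + y + z) ^ 3 ≤ (3 * c) ^ 3 :=
    pow_le_pow_left₀ (by positivity) h 3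
  nlinarith

theorem Admissible.mixed_mem {a b : ℝ × ℝ × ℝ} (h : Admissible a b) :
    (b.1, a.2.1, a.2.2) ∈ T := by
  simpa using h (0, 1, 1) (by norm_num [T]) (1, 0, 0) (by norm_num [T])

theorem stmt_8_general (a₁ a₂ a₃ b₁ b₂ b₃ : ℝ)
    (hadm : Admissible (a₁, a₂, a₃) (b₁, b₂, b₃)) :
    b₁ * a₂ * a₃ ≤ 8 / 27 := by
  obtain ⟨hb₁, -, ha₂, -, ha₃, -, hsum⟩ := hadm.mixed_mem
  calc b₁ * a₂ * a₃ ≤ (2 / 3) ^ 3 := mul_mul_le_of_add_add_le hb₁ ha₂ ha₃ (by linarith)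
    _ = 8 / 27 := by norm_num

theorem stmt_8 (a₁ a₂ a₃ b₁ b₂ b₃ : ℝ)
    (ha₁ : 0 ≤ a₁) (ha₂ : 0 ≤ a₂) (ha₃ : 0 ≤ a₃)
    (hb₁ : 0 ≤ b₁) (hb₂ : 0 ≤ b₂) (hb₃ : 0 ≤ b₃)
    (hadm : Admissible (a₁, a₂, a₃) (b₁, b₂, b₃)) :
    b₁ * a₂ * a₃ ≤ 8 / 27 :=
  stmt_8_general a₁ a₂ a₃ b₁ b₂ b₃ hadm
end

section
/- Let Φ be the map on functions from ℕ to measures on ℕ defined by Φ(φ)(m) = (1/2)•φ(m+1) + (1/2)•δ_m, where δ_m is the Dirac measure at m. Then Φ is monotone for the pointwise order; for every k ∈ ℕ and m ∈ ℕ, the k-th iterate from the bottom element (the constant zero-measure function) satisfies Φᵏ(⊥)(m) = Σ_{i=0}^{k−1} 2^{−(i+1)} • δ_{m+i}; and the least fixed point φ* of Φ satisfies φ*(m) = Σ_{i∈ℕ} 2^{−(i+1)} • δ_{m+i} for every m. In particular, φ*(0)({n}) = 2^{−(n+1)} for every n ∈ ℕ. -/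
open MeasureTheory
open scoped ENNReal

theorem stmt_13 (Φ : (ℕ → Measure ℕ) → (ℕ → Measure ℕ))
    (hΦ : Φ = fun φ m => (1/2 : ℝ≥0∞) • φ (m + 1) + (1/2 : ℝ≥0∞) • Measure.dirac m) :
    Monotone Φ ∧
    (∀ k m : ℕ, Φ^[k] (fun _ => 0) m =
      ∑ i ∈ Finset.range k, ((2 : ℝ≥0∞) ^ (i + 1))⁻¹ • Measure.dirac (m + i)) ∧
    (∀ hmono : Monotone Φ,
      (∀ m : ℕ, OrderHom.lfp ⟨Φ, hmono⟩ m =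
        Measure.sum (fun i : ℕ => ((2 : ℝ≥0∞) ^ (i + 1))⁻¹ • Measure.dirac (m + i))) ∧
      ∀ n : ℕ, (OrderHom.lfp ⟨Φ, hmono⟩ 0 : Measure ℕ) {n} = ((2 : ℝ≥0∞) ^ (n + 1))⁻¹) := by
  set g : ℕ → ℕ → Measure ℕ :=
    fun m i => ((2 : ℝ≥0∞) ^ (i + 1))⁻¹ • Measure.dirac (m + i) with hg
  have hΦ' : ∀ φ m, Φ φ m = (1/2 : ℝ≥0∞) • φ (m + 1) + (1/2 : ℝ≥0∞) • Measure.dirac m := by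
    intro φ m; rw [hΦ]
  have hmono : Monotone Φ := by
    intro φ₁ φ₂ h m
    rw [hΦ' φ₁ m, hΦ' φ₂ m, Measure.le_iff']
    intro s
    simp only [Measure.add_apply, Measure.smul_apply, smul_eq_mul]
    gcongr
    exact h (m + 1)
  have hstep : ∀ m i : ℕ, (1/2 : ℝ≥0∞) • g (m + 1) i = g m (i + 1) := by
    intro m i
    rw [hg]
    dsimp only
    rw [smul_smul]
    congr 1
    · rw [one_div, ← ENNReal.mul_inv (by simp) (by simp)]
      congr 1
      rw [pow_succ]
      ring
    · congr 1
      omega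
  have hiter : ∀ k m : ℕ, Φ^[k] (fun _ => 0) m = ∑ i ∈ Finset.range k, g m i := by
    intro k
    induction k with
    | zero => intro m; simp
    | succ k ih =>
      intro m
      rw [Function.iterate_succ_apply', hΦ', ih (m + 1), Finset.sum_range_succ',
        Finset.smul_sum]
      congr 1
      · exact Finset.sum_congr rfl fun i _ => hstep m i
      · simp [hg, pow_one, one_div]
  refine ⟨hmono, hiter, fun hmono' => ?_⟩
  -- the candidate fixed point
  set ψ : ℕ → Measure ℕ := fun m => Measure.sum (g m) with hψ
  have key : ∀ s : Set ℕ, MeasurableSet s → ∀ m, ψ m s = ∑' i, g m i s := by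
    intro s hs m
    rw [hψ]; exact Measure.sum_apply _ hs
  have hfix : Φ ψ = ψ := by
    funext m
    rw [hΦ']
    ext s hs
    rw [Measure.add_apply, Measure.smul_apply, Measure.smul_apply, key s hs (m + 1),
      key s hs m]
    conv_rhs => rw [tsum_eq_zero_add' ENNReal.summable]
    have h0 : (g m 0) s = 1/2 * (Measure.dirac m) s := by
      simp [hg, Measure.smul_apply, pow_one, one_div]
    have h1 : ∀ i, (g m (i+1)) s = 1/2 * (g (m+1) i) s := fun i => by
      rw [← hstep m i, Measure.smul_apply, smul_eq_mul]
    simp only [h1, h0, ENNReal.tsum_mul_left]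
    rw [smul_eq_mul, smul_eq_mul, add_comm]
  have hle : OrderHom.lfp ⟨Φ, hmono'⟩ ≤ ψ := OrderHom.lfp_le _ (le_of_eq hfix)
  have hge : ψ ≤ OrderHom.lfp ⟨Φ, hmono'⟩ := by
    have hk : ∀ k, Φ^[k] (fun _ => 0) ≤ OrderHom.lfp ⟨Φ, hmono'⟩ := by
      intro k
      induction k with
      | zero =>
        simp only [Function.iterate_zero, id_eq]
        intro m
        exact Measure.zero_le _
      | succ k ih =>
        rw [Function.iterate_succ_apply']
        calc Φ (Φ^[k] (fun _ => 0))
            ≤ Φ (OrderHom.lfp ⟨Φ, hmono'⟩) := hmono' ih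
          _ = OrderHom.lfp ⟨Φ, hmono'⟩ := OrderHom.map_lfp ⟨Φ, hmono'⟩
    intro m
    rw [Measure.le_iff]
    intro s hs
    rw [key s hs m]
    refine ENNReal.tsum_le_of_sum_range_le fun k => ?_
    calc ∑ i ∈ Finset.range k, g m i s
        = (∑ i ∈ Finset.range k, g m i) s := (Measure.finset_sum_apply _ _ _).symm
      _ = (Φ^[k] (fun _ => 0) m) s := by rw [hiter k m]
      _ ≤ (OrderHom.lfp ⟨Φ, hmono'⟩ m) s := Measure.le_iff'.mp (hk k m) s
  have heq : OrderHom.lfp ⟨Φ, hmono'⟩ = ψ := le_antisymm hle hge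
  constructor
  · intro m
    have := congrFun heq m
    rw [this]
  · intro n
    rw [congrFun heq 0, key {n} (measurableSet_singleton n) 0, tsum_eq_single n]
    · rw [hg]
      dsimp only
      rw [Measure.smul_apply, smul_eq_mul, Measure.dirac_apply]
      simp
    · intro i hi
      rw [hg]
      dsimp only
      rw [Measure.smul_apply, smul_eq_mul, Measure.dirac_apply]
      simp [Set.indicator_apply, hi]
end

section
/- Let X be a measurable space, ν a measure on X with ν(X) ≤ 1, and s₀, s₁ : X → [0,∞] measurable functions with s₀(x) + s₁(x) ≤ 1 for every x. Let p = ∫ s₁ dν (so p ≤ 1) and let Φ be the map on measures on X defined by Φ(μ) = ν.withDensity s₀ + p • μ, where ν.withDensity s₀ is the measure with density s₀ with respect to ν. Then Φ is monotone, and: (i) if p < 1, the least fixed point of Φ is (1 − p)⁻¹ • (ν.withDensity s₀), which is a measure of total mass at most 1; (ii) if p = 1, then ν.withDensity s₀ is the zero measure and the least fixed point of Φ is the zero measure. -/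
/-!
`Φ` is affine with slope `p`, so its least fixed point is the Neumann series
`∑ pⁿ • ν.withDensity s₀ = (1 - p)⁻¹ • ν.withDensity s₀`: this measure is a fixed point, and by
induction every prefixed point dominates each partial sum. In `ℝ≥0∞` the formula holds for every
`p`, with `(1 - p)⁻¹ = ∞` when `p ≥ 1`. The mass bound `∫ s₀ dν + p ≤ ν(X) ≤ 1` gives `p ≤ 1` and
the total mass of the fixed point, and for `p = 1` it forces `∫ s₀ dν = 0`, whence the least fixed
point is `∞ • 0 = 0`.
-/

open MeasureTheory
open scoped ENNReal

namespace ENNReal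

theorem one_add_mul_inv_one_sub (c : ℝ≥0∞) : 1 + c * (1 - c)⁻¹ = (1 - c)⁻¹ := by
  rcases lt_or_ge c 1 with hc | hc
  · have h₀ : 1 - c ≠ 0 := (tsub_pos_of_lt hc).ne'
    have h_top : 1 - c ≠ ∞ := sub_ne_top one_ne_top
    calc 1 + c * (1 - c)⁻¹ = ((1 - c) + c) * (1 - c)⁻¹ := by
          rw [add_mul, ENNReal.mul_inv_cancel h₀ h_top]
      _ = (1 - c)⁻¹ := by rw [tsub_add_cancel_of_le hc.le, one_mul]
  · rw [tsub_eq_zero_of_le hc, inv_zero, mul_top (zero_lt_one.trans_le hc).ne', add_top]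

theorem eq_zero_of_add_one_le_one {a : ℝ≥0∞} (h : a + 1 ≤ 1) : a = 0 := by
  simpa using le_sub_of_add_le_right one_ne_top h

theorem inv_one_sub_mul_le_one {a c : ℝ≥0∞} (h : a + c ≤ 1) (hc : c < 1) :
    (1 - c)⁻¹ * a ≤ 1 := by
  rw [ENNReal.inv_mul_le_iff (tsub_pos_of_lt hc).ne' (sub_ne_top one_ne_top), mul_one]
  exact le_sub_of_add_le_right (hc.trans one_lt_top).ne h

end ENNReal

namespace MeasureTheory

variable {X : Type*} [MeasurableSpace X]

theorem lintegral_add_lintegral_le_measure_univ {μ : Measure X} {f g : X → ℝ≥0∞}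
    (h : ∀ x, f x + g x ≤ 1) : ∫⁻ x, f x ∂μ + ∫⁻ x, g x ∂μ ≤ μ Set.univ :=
  calc ∫⁻ x, f x ∂μ + ∫⁻ x, g x ∂μ ≤ ∫⁻ x, f x + g x ∂μ := le_lintegral_add f g
    _ ≤ ∫⁻ _, 1 ∂μ := lintegral_mono h
    _ = μ Set.univ := lintegral_one

namespace Measure

theorem monotone_add_smul (ρ : Measure X) (c : ℝ≥0∞) : Monotone fun μ : Measure X ↦ ρ + c • μ :=
  fun _ _ h ↦ add_le_add_right (smul_le_smul_left c h) ρ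

theorem geom_sum_smul_le_of_add_smul_le {ρ μ : Measure X} {c : ℝ≥0∞} (hμ : ρ + c • μ ≤ μ)
    (n : ℕ) : (∑ i ∈ Finset.range n, c ^ i) • ρ ≤ μ := by
  induction n with
  | zero => simpa using Measure.zero_le μ
  | succ n ih =>
    calc (∑ i ∈ Finset.range (n + 1), c ^ i) • ρ
        = ρ + c • (∑ i ∈ Finset.range n, c ^ i) • ρ := by
          rw [geom_sum_succ, add_smul, mul_smul, one_smul, add_comm]
      _ ≤ ρ + c • μ := monotone_add_smul ρ c ih
      _ ≤ μ := hμ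

theorem inv_one_sub_smul_le_of_add_smul_le {ρ μ : Measure X} {c : ℝ≥0∞}
    (hμ : ρ + c • μ ≤ μ) : (1 - c)⁻¹ • ρ ≤ μ := by
  refine le_iff'.2 fun A ↦ ?_
  rw [← ENNReal.tsum_geometric, smul_apply, smul_eq_mul, ENNReal.tsum_eq_iSup_nat,
    ENNReal.iSup_mul]
  exact iSup_le fun n ↦ geom_sum_smul_le_of_add_smul_le hμ n A

theorem lfp_add_smul (ρ : Measure X) (c : ℝ≥0∞) :
    OrderHom.lfp ⟨fun μ ↦ ρ + c • μ, monotone_add_smul ρ c⟩ = (1 - c)⁻¹ • ρ := by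
  refine le_antisymm (OrderHom.lfp_le_fixed _ ?_)
    (OrderHom.le_lfp _ fun _ ↦ inv_one_sub_smul_le_of_add_smul_le)
  change ρ + c • (1 - c)⁻¹ • ρ = (1 - c)⁻¹ • ρ
  nth_rw 1 [← one_smul ℝ≥0∞ ρ]
  rw [smul_smul, ← add_smul, ENNReal.one_add_mul_inv_one_sub]

end Measure

end MeasureTheory

theorem stmt_14_general {X : Type*} [MeasurableSpace X] (ν : Measure X)
    (hν : ν Set.univ ≤ 1) (s₀ s₁ : X → ℝ≥0∞)
    (hsum : ∀ x, s₀ x + s₁ x ≤ 1)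
    (p : ℝ≥0∞) (hp : p = ∫⁻ x, s₁ x ∂ν)
    (Φ : Measure X → Measure X)
    (hΦ : Φ = fun μ => ν.withDensity s₀ + p • μ) :
    p ≤ 1 ∧
    Monotone Φ ∧
    (∀ hmono : Monotone Φ,
      (p < 1 →
        OrderHom.lfp ⟨Φ, hmono⟩ = (1 - p)⁻¹ • ν.withDensity s₀ ∧
        ((1 - p)⁻¹ • ν.withDensity s₀ : Measure X) Set.univ ≤ 1) ∧
      (p = 1 →
        ν.withDensity s₀ = 0 ∧ OrderHom.lfp ⟨Φ, hmono⟩ = 0)) := by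
  have hmass : ν.withDensity s₀ Set.univ + p ≤ 1 := by
    rw [withDensity_apply _ MeasurableSet.univ, Measure.restrict_univ, hp]
    exact (lintegral_add_lintegral_le_measure_univ hsum).trans hν
  have hlfp (hmono : Monotone Φ) : OrderHom.lfp ⟨Φ, hmono⟩ = (1 - p)⁻¹ • ν.withDensity s₀ := by
    subst hΦ
    exact Measure.lfp_add_smul _ _
  refine ⟨le_of_add_le_right hmass, hΦ ▸ Measure.monotone_add_smul _ _,
    fun hmono ↦ ⟨fun hlt ↦ ⟨hlfp hmono, ENNReal.inv_one_sub_mul_le_one hmass hlt⟩, fun hp1 ↦ ?_⟩⟩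
  have hzero : ν.withDensity s₀ = 0 :=
    Measure.measure_univ_eq_zero.1 (ENNReal.eq_zero_of_add_one_le_one (hp1 ▸ hmass))
  exact ⟨hzero, by rw [hlfp hmono, hzero, smul_zero]⟩

theorem stmt_14 {X : Type*} [MeasurableSpace X] (ν : Measure X)
    (hν : ν Set.univ ≤ 1) (s₀ s₁ : X → ℝ≥0∞)
    (hs₀ : Measurable s₀) (hs₁ : Measurable s₁)
    (hsum : ∀ x, s₀ x + s₁ x ≤ 1)
    (p : ℝ≥0∞) (hp : p = ∫⁻ x, s₁ x ∂ν)
    (Φ : Measure X → Measure X)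
    (hΦ : Φ = fun μ => ν.withDensity s₀ + p • μ) :
    p ≤ 1 ∧
    Monotone Φ ∧
    (∀ hmono : Monotone Φ,
      (p < 1 →
        OrderHom.lfp ⟨Φ, hmono⟩ = (1 - p)⁻¹ • ν.withDensity s₀ ∧
        ((1 - p)⁻¹ • ν.withDensity s₀ : Measure X) Set.univ ≤ 1) ∧
      (p = 1 →
        ν.withDensity s₀ = 0 ∧ OrderHom.lfp ⟨Φ, hmono⟩ = 0)) :=
  stmt_14_general ν hν s₀ s₁ hsum p hp Φ hΦ
end

section
/- Let X be a measurable space, ν a measure on X with ν(X) ≤ 1, and U, V disjoint measurable subsets of X. Let Φ be the map on measures on X defined by Φ(μ) = ν restricted to U plus ν(V) • μ. If ν(V) < 1, then the least fixed point of Φ is (1 − ν(V))⁻¹ • (ν restricted to U); if ν(V) = 1, the least fixed point is the zero measure. Moreover, if ν is a probability measure, V is the complement of U, and ν(U) ≠ 0, then the least fixed point μ* satisfies μ*(W) = ν(U ∩ W)/ν(U) for every measurable set W, i.e., μ* is the conditional probability of ν given U. -/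
open MeasureTheory
open scoped ENNReal

theorem stmt_15 {X : Type*} [MeasurableSpace X] (ν : Measure X)
    (hν : ν Set.univ ≤ 1) (U V : Set X)
    (hU : MeasurableSet U) (hV : MeasurableSet V) (hUV : Disjoint U V)
    (Φ : Measure X → Measure X)
    (hΦ : Φ = fun μ => ν.restrict U + ν V • μ) :
    Monotone Φ ∧
    (∀ hmono : Monotone Φ,
      (ν V < 1 → OrderHom.lfp ⟨Φ, hmono⟩ = (1 - ν V)⁻¹ • ν.restrict U) ∧
      (ν V = 1 → OrderHom.lfp ⟨Φ, hmono⟩ = 0) ∧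
      (IsProbabilityMeasure ν → V = Uᶜ → ν U ≠ 0 →
        ∀ W : Set X, MeasurableSet W →
          (OrderHom.lfp ⟨Φ, hmono⟩ : Measure X) W = ν (U ∩ W) / ν U)) := by
  set c := ν V with hc
  have hc1 : c ≤ 1 := le_trans (measure_mono (Set.subset_univ V)) hν
  have hcne : c ≠ ∞ := (lt_of_le_of_lt hc1 (by norm_num)).ne
  have hmono : Monotone Φ := by
    intro a b hab
    rw [hΦ]
    refine add_le_add le_rfl ?_
    rw [Measure.le_iff]
    intro s hs
    simp only [Measure.smul_apply, smul_eq_mul]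
    exact mul_le_mul_right (Measure.le_iff.mp hab s hs) c
  refine ⟨hmono, fun hmono' => ?_⟩
  -- the lfp doesn't depend on which monotonicity proof
  have key1 : c < 1 → OrderHom.lfp ⟨Φ, hmono'⟩ = (1 - c)⁻¹ • ν.restrict U := by
    intro hclt
    have h1c : (1 : ℝ≥0∞) - c ≠ 0 := (tsub_pos_of_lt hclt).ne'
    have h1ctop : (1 : ℝ≥0∞) - c ≠ ∞ := by
      exact (lt_of_le_of_lt (tsub_le_self) (by norm_num)).ne
    set μ₀ : Measure X := (1 - c)⁻¹ • ν.restrict U with hμ₀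
    have harith : (1 - c)⁻¹ = 1 + c * (1 - c)⁻¹ := by
      have : (1 : ℝ≥0∞) + c * (1 - c)⁻¹ = ((1 - c) + c) * (1 - c)⁻¹ := by
        rw [add_mul, ENNReal.mul_inv_cancel h1c h1ctop]
      rw [this, tsub_add_cancel_of_le hc1, one_mul]
    have hfix : Φ μ₀ = μ₀ := by
      simp only [hΦ, hμ₀, smul_smul]
      conv_rhs => rw [harith, add_smul, one_smul]
    refine le_antisymm (OrderHom.lfp_le _ (le_of_eq hfix)) ?_
    -- μ₀ ≤ lfp
    have hm := OrderHom.map_lfp (⟨Φ, hmono'⟩ : Measure X →o Measure X)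
    set m := OrderHom.lfp (⟨Φ, hmono'⟩ : Measure X →o Measure X) with hmdef
    have hmeq : ∀ s : Set X, m s = ν.restrict U s + c * m s := by
      intro s
      conv_lhs => rw [← hm]
      simp [hΦ]
    rw [Measure.le_iff]
    intro s hs
    have hpart : ∀ n : ℕ, (∑ k ∈ Finset.range n, c ^ k * ν.restrict U s) ≤ m s := by
      intro n
      induction n with
      | zero => simp
      | succ n ih =>
        rw [Finset.sum_range_succ']
        simp only [pow_succ, pow_zero, one_mul]
        have : (∑ k ∈ Finset.range n, c ^ k * c * ν.restrict U s)
            = c * ∑ k ∈ Finset.range n, c ^ k * ν.restrict U s := by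
          rw [Finset.mul_sum]; congr 1; ext k; ring
        rw [this, hmeq s, add_comm]
        exact add_le_add le_rfl (mul_le_mul_right ih c)
    have htsum : (∑' k : ℕ, c ^ k * ν.restrict U s) ≤ m s :=
      Summable.tsum_le_of_sum_range_le ENNReal.summable hpart
    calc μ₀ s = (1 - c)⁻¹ * ν.restrict U s := by simp [hμ₀]
      _ = (∑' k : ℕ, c ^ k) * ν.restrict U s := by rw [ENNReal.tsum_geometric]
      _ = ∑' k : ℕ, c ^ k * ν.restrict U s := by rw [ENNReal.tsum_mul_right]
      _ ≤ m s := htsum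
  refine ⟨key1, ?_, ?_⟩
  · intro hc1'
    have hU0 : ν U = 0 := by
      have h2 : ν U + ν V ≤ 1 := by
        rw [← measure_union hUV hV]
        exact le_trans (measure_mono (Set.subset_univ _)) hν
      rw [← hc, hc1'] at h2
      have h3 : ν U + 1 ≤ 0 + 1 := le_trans h2 (by simp)
      exact le_antisymm ((ENNReal.add_le_add_iff_right ENNReal.one_ne_top).mp h3) (zero_le)
    have hres : ν.restrict U = 0 := Measure.restrict_eq_zero.mpr hU0
    have hfix0 : Φ 0 = 0 := by rw [hΦ]; simp [hres]
    exact le_antisymm (OrderHom.lfp_le _ (le_of_eq hfix0)) (Measure.zero_le _)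
  · intro hprob hVc hU0 W hW
    have hνV : ν V = 1 - ν U := by
      rw [hVc, measure_compl hU (measure_ne_top ν U), measure_univ]
    have hUle : ν U ≤ 1 := le_trans (measure_mono (Set.subset_univ U)) hν
    have hclt : c < 1 := by
      rw [hc, hνV]
      exact ENNReal.sub_lt_self (by norm_num) (by norm_num) hU0
    have h1c : (1 : ℝ≥0∞) - c = ν U := by
      rw [hc, hνV, ENNReal.sub_sub_cancel (by norm_num) hUle]
    rw [key1 hclt, h1c]
    rw [Measure.smul_apply, Measure.restrict_apply' hU, smul_eq_mul, Set.inter_comm,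
      ENNReal.div_eq_inv_mul]
end
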